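/- Let f_i : ℝ^{n_i} → ℝ be differentiable, α-strongly convex (α > 0), with L_i-Lipschitz gradient; let A_i ∈ ℝ^{m×n_i}, c ∈ ℝ^m, ρ > 0, γ > 0, s > 0, and P_i symmetric positive semi-definite. Let c_A > 0 satisfy (∑_i ‖A_iᵀμ‖²)^{1/2} ≥ c_A‖μ‖ for all μ ∈ ℝ^m; set L := max_i L_i², D := ∑_i ‖A_iᵀ‖². Suppose (x*, λ*) satisfies ∇f_i(x_i*) = A_iᵀλ* and ∑_i A_i x_i* = c, x_i⁺ satisfies ∇f_i(x_i⁺) = A_iᵀλ − ρA_iᵀ(A_ix_i⁺ + ∑_{j≠i}A_jx_j − c) + P_i(x_i − x_i⁺) for each i, and λ⁺ = λ − γρ(∑_i A_i x_i⁺ − c). Then (1/(2γρ) − sc_A²)‖λ − λ*‖² + (1/2)∑_i ‖x_i − x_i*‖²_{ρA_iᵀA_i+P_i} + 4sρ²D‖∑_{j=1}^N A_j(x_j − x_j*)‖² ≥ (α − 2Ls)∑_i ‖x_i⁺ − x_i*‖² + (1/(2γρ))‖λ⁺ − λ*‖² + (1/2)∑_i ‖x_i⁺ − x_i*‖²_{ρA_iᵀA_i+P_i}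 + (1/2)∑_i ‖x_i⁺ − x_i‖²_{ρA_iᵀA_i+P_i} − 4s∑_i ‖(ρA_iᵀA_i + P_i)(x_i⁺ − x_i)‖² + ((2−γ)/(2γ²ρ))‖λ⁺ − λ‖² + (1/γ)⟨λ − λ⁺, ∑_i A_i(x_i − x_i⁺)⟩. -/

import Mathlib

/-!
Write `Mᵢ = ρAᵢᵀAᵢ + Pᵢ` and `u = ∑ⱼ Aⱼ(xⱼ - xⱼ*)`. Subtracting the KKT condition from the
optimality condition of the `x`-update gives
`∇fᵢ(xᵢ⁺) - ∇fᵢ(xᵢ*) = Aᵢᵀ(λ - λ*) - Mᵢ(xᵢ⁺ - xᵢ) - ρAᵢᵀu`.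
Pairing this with `xᵢ⁺ - xᵢ*`, using strong monotonicity of `∇fᵢ` and polarization for `Mᵢ`,
and substituting `λ - λ⁺ = γρ ∑ᵢ Aᵢ(xᵢ⁺ - xᵢ*)` gives the descent inequality. Read as a formula for
`Aᵢᵀ(λ - λ*)`, the same identity together with the Lipschitz bound and
`‖a + b + c‖² ≤ 2‖a‖² + 4‖b‖² + 4‖c‖²` bounds `c_A²‖λ - λ*‖²`; the claim is the descent
inequality plus `s` times this bound.
-/

open Matrix Finset RealInnerProductSpace

/-- Matrix-vector multiplication `A x` as a map between Euclidean spaces. -/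
noncomputable def mv {a b : ℕ} (A : Matrix (Fin a) (Fin b) ℝ)
    (x : EuclideanSpace ℝ (Fin b)) : EuclideanSpace ℝ (Fin a) :=
  Matrix.toEuclideanLin A x

/-- Quadratic form `xᵀ M x`. -/
noncomputable def qf {a : ℕ} (M : Matrix (Fin a) (Fin a) ℝ)
    (x : EuclideanSpace ℝ (Fin a)) : ℝ := ⟪x, mv M x⟫

/-- Operator norm of a matrix, viewed as a linear map between Euclidean spaces. -/
noncomputable def opN {a b : ℕ} (A : Matrix (Fin a) (Fin b) ℝ) : ℝ :=
  ‖(LinearMap.toContinuousLinearMap (Matrix.toEuclideanLin A))‖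

section MatrixVector

variable {a b k : ℕ}

lemma mv_sub (A : Matrix (Fin a) (Fin b) ℝ) (x y : EuclideanSpace ℝ (Fin b)) :
    mv A (x - y) = mv A x - mv A y :=
  map_sub _ _ _

lemma mv_add (A : Matrix (Fin a) (Fin b) ℝ) (x y : EuclideanSpace ℝ (Fin b)) :
    mv A (x + y) = mv A x + mv A y :=
  map_add _ _ _

lemma mv_matrix_add (A B : Matrix (Fin a) (Fin b) ℝ) (x : EuclideanSpace ℝ (Fin b)) :
    mv (A + B) x = mv A x + mv B x := by
  simp [mv]

lemma mv_matrix_smul (r : ℝ) (A : Matrix (Fin a) (Fin b) ℝ) (x : EuclideanSpace ℝ (Fin b)) :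
    mv (r • A) x = r • mv A x := by
  simp [mv]

lemma mv_mul (A : Matrix (Fin a) (Fin b) ℝ) (B : Matrix (Fin b) (Fin k) ℝ)
    (x : EuclideanSpace ℝ (Fin k)) : mv (A * B) x = mv A (mv B x) := by
  ext j
  simp [mv, Matrix.mulVec_mulVec]

lemma inner_mv_transpose (A : Matrix (Fin a) (Fin b) ℝ) (x : EuclideanSpace ℝ (Fin b))
    (y : EuclideanSpace ℝ (Fin a)) : ⟪x, mv Aᵀ y⟫ = ⟪mv A x, y⟫ := by
  simp only [mv, PiLp.inner_apply, RCLike.inner_apply, starRingEnd_apply, star_trivial]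
  change (Aᵀ *ᵥ y.ofLp) ⬝ᵥ x.ofLp = y.ofLp ⬝ᵥ (A *ᵥ x.ofLp)
  rw [dotProduct_mulVec, mulVec_transpose, dotProduct_comm]

lemma norm_mv_le_opN (A : Matrix (Fin a) (Fin b) ℝ) (x : EuclideanSpace ℝ (Fin b)) :
    ‖mv A x‖ ≤ opN A * ‖x‖ :=
  (LinearMap.toContinuousLinearMap (Matrix.toEuclideanLin A)).le_opNorm x

lemma two_inner_mv_eq_qf {M : Matrix (Fin a) (Fin a) ℝ} (hM : Mᵀ = M)
    (x y : EuclideanSpace ℝ (Fin a)) :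
    2 * ⟪x, mv M y⟫ = qf M x + qf M y - qf M (x - y) := by
  have hsymm : ⟪y, mv M x⟫ = ⟪x, mv M y⟫ := by
    rw [← hM, inner_mv_transpose, hM, real_inner_comm]
  simp only [qf, mv_sub, inner_sub_left, inner_sub_right, hsymm]
  ring

end MatrixVector

section RealInner

variable {E : Type*} [NormedAddCommGroup E] [InnerProductSpace ℝ E]

lemma two_mul_norm_sub_sq_le_inner_of_strongConvex {f : E → ℝ} {g : E → E} {α : ℝ}
    (hsc : ∀ x y, f y ≥ f x + ⟪y - x, g x⟫ + α * ‖x - y‖ ^ 2) (x y : E) :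
    2 * α * ‖x - y‖ ^ 2 ≤ ⟪x - y, g x - g y⟫ := by
  have hxy := hsc x y
  have hyx := hsc y x
  rw [← neg_sub x y, inner_neg_left] at hxy
  rw [norm_sub_rev y x] at hyx
  rw [inner_sub_right]
  linarith

lemma inner_dual_step_eq {γ ρ : ℝ} (hγ : γ ≠ 0) (hρ : ρ ≠ 0) {lam lamp r : E} (lamstar u : E)
    (h : lam - lamp = (γ * ρ) • r) :
    ⟪r, lam - lamstar⟫ - ρ * ⟪r, u⟫
      = 1 / (2 * γ * ρ) * (‖lam - lamstar‖ ^ 2 - ‖lamp - lamstar‖ ^ 2)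
        - (2 - γ) / (2 * γ ^ 2 * ρ) * ‖lamp - lam‖ ^ 2 - 1 / γ * ⟪lam - lamp, u - r⟫ := by
  have hp : lamp - lamstar = (lam - lamstar) - (γ * ρ) • r := by rw [← h]; abel
  have hq : lamp - lam = -((γ * ρ) • r) := by rw [← h, neg_sub]
  rw [hp, hq, h, norm_neg, norm_sub_sq_real (lam - lamstar), norm_smul, mul_pow,
    Real.norm_eq_abs, sq_abs, real_inner_smul_left, real_inner_smul_right, inner_sub_right r u r,
    real_inner_self_eq_norm_sq, real_inner_comm (lam - lamstar) r]
  field_simp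
  ring

end RealInner

lemma norm_add_add_sq_le {E : Type*} [SeminormedAddGroup E] (a b c : E) :
    ‖a + b + c‖ ^ 2 ≤ 2 * ‖a‖ ^ 2 + 4 * ‖b‖ ^ 2 + 4 * ‖c‖ ^ 2 := by
  have h := norm_add₃_le (a := a) (b := b) (c := c)
  have h0 := norm_nonneg (a + b + c)
  nlinarith [mul_self_le_mul_self h0 h, sq_nonneg (‖a‖ - ‖b‖ - ‖c‖), sq_nonneg (‖b‖ - ‖c‖)]

section Blocks

variable {m k : ℕ}

lemma transpose_smul_transpose_mul_add (A : Matrix (Fin m) (Fin k) ℝ)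
    {P : Matrix (Fin k) (Fin k) ℝ} (hP : P.PosSemidef) (ρ : ℝ) :
    (ρ • (Aᵀ * A) + P)ᵀ = ρ • (Aᵀ * A) + P := by
  rw [transpose_add, transpose_smul, transpose_mul, transpose_transpose,
    (conjTranspose_eq_transpose_of_trivial P).symm.trans hP.isHermitian]

lemma inner_block_eq (A : Matrix (Fin m) (Fin k) ℝ) {M : Matrix (Fin k) (Fin k) ℝ} (hM : Mᵀ = M)
    (ρ : ℝ) (μ u : EuclideanSpace ℝ (Fin m)) (y yp ystar : EuclideanSpace ℝ (Fin k)) :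
    ⟪yp - ystar, mv Aᵀ μ - mv M (yp - y) - ρ • mv Aᵀ u⟫
      = ⟪mv A (yp - ystar), μ⟫ - ρ * ⟪mv A (yp - ystar), u⟫
        - 1 / 2 * (qf M (yp - ystar) + qf M (yp - y) - qf M (y - ystar)) := by
  have hpol := two_inner_mv_eq_qf hM (yp - ystar) (yp - y)
  rw [sub_sub_sub_cancel_left] at hpol
  rw [inner_sub_right, inner_sub_right, real_inner_smul_right, inner_mv_transpose,
    inner_mv_transpose]
  linarith

lemma norm_sq_le_of_eq_add_add_smul_mv (B : Matrix (Fin k) (Fin m) ℝ) {ρ l L : ℝ}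
    {w a b d : EuclideanSpace ℝ (Fin k)} {u : EuclideanSpace ℝ (Fin m)}
    (hw : w = a + b + ρ • mv B u) (ha : ‖a‖ ≤ l * ‖d‖) (hl : l ^ 2 ≤ L) :
    ‖w‖ ^ 2 ≤ 2 * L * ‖d‖ ^ 2 + 4 * ‖b‖ ^ 2 + 4 * ρ ^ 2 * opN B ^ 2 * ‖u‖ ^ 2 := by
  have ha2 : ‖a‖ ^ 2 ≤ L * ‖d‖ ^ 2 :=
    calc ‖a‖ ^ 2 ≤ (l * ‖d‖) ^ 2 := pow_le_pow_left₀ (norm_nonneg a) ha 2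
      _ = l ^ 2 * ‖d‖ ^ 2 := mul_pow l ‖d‖ 2
      _ ≤ L * ‖d‖ ^ 2 := mul_le_mul_of_nonneg_right hl (sq_nonneg _)
  have hc2 : ‖ρ • mv B u‖ ^ 2 ≤ ρ ^ 2 * opN B ^ 2 * ‖u‖ ^ 2 :=
    calc ‖ρ • mv B u‖ ^ 2 = ρ ^ 2 * ‖mv B u‖ ^ 2 := by
          rw [norm_smul, Real.norm_eq_abs, mul_pow, sq_abs]
      _ ≤ ρ ^ 2 * (opN B * ‖u‖) ^ 2 := by gcongr; exact norm_mv_le_opN B u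
      _ = ρ ^ 2 * opN B ^ 2 * ‖u‖ ^ 2 := by ring
  rw [hw]
  linarith [norm_add_add_sq_le a b (ρ • mv B u)]

end Blocks

section Decomposition

variable {N m : ℕ} {n : Fin N → ℕ}

lemma admm_update_sub_kkt (A : (i : Fin N) → Matrix (Fin m) (Fin (n i)) ℝ)
    (P : (i : Fin N) → Matrix (Fin (n i)) (Fin (n i)) ℝ) (ρ : ℝ)
    (x xstar : (i : Fin N) → EuclideanSpace ℝ (Fin (n i))) (lam lamstar : EuclideanSpace ℝ (Fin m))
    (i : Fin N) (xpi : EuclideanSpace ℝ (Fin (n i))) :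
    mv (A i)ᵀ lam
        - ρ • mv (A i)ᵀ (mv (A i) xpi + (∑ j ∈ univ.erase i, mv (A j) (x j))
          - ∑ j, mv (A j) (xstar j))
        + mv (P i) (x i - xpi) - mv (A i)ᵀ lamstar
      = mv (A i)ᵀ (lam - lamstar) - mv (ρ • ((A i)ᵀ * A i) + P i) (xpi - x i)
        - ρ • mv (A i)ᵀ (∑ j, mv (A j) (x j - xstar j)) := by
  have hres : mv (A i) xpi + (∑ j ∈ univ.erase i, mv (A j) (x j)) - ∑ j, mv (A j) (xstar j)
      = mv (A i) (xpi - x i) + ∑ j, mv (A j) (x j - xstar j) := by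
    simp only [sum_erase_eq_sub (mem_univ i), mv_sub, sum_sub_distrib]
    abel
  rw [hres]
  simp only [mv_sub, mv_add, mv_matrix_add, mv_matrix_smul, mv_mul]
  module

lemma sum_block_descent (A : (i : Fin N) → Matrix (Fin m) (Fin (n i)) ℝ)
    {M : (i : Fin N) → Matrix (Fin (n i)) (Fin (n i)) ℝ} (hM : ∀ i, (M i)ᵀ = M i) (ρ α : ℝ)
    (μ u : EuclideanSpace ℝ (Fin m)) (x xp xstar : (i : Fin N) → EuclideanSpace ℝ (Fin (n i)))
    (h : ∀ i, α * ‖xp i - xstar i‖ ^ 2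
      ≤ ⟪xp i - xstar i, mv (A i)ᵀ μ - mv (M i) (xp i - x i) - ρ • mv (A i)ᵀ u⟫) :
    α * ∑ i, ‖xp i - xstar i‖ ^ 2
      ≤ ⟪∑ i, mv (A i) (xp i - xstar i), μ⟫ - ρ * ⟪∑ i, mv (A i) (xp i - xstar i), u⟫
        - 1 / 2 * (∑ i, qf (M i) (xp i - xstar i) + ∑ i, qf (M i) (xp i - x i)
          - ∑ i, qf (M i) (x i - xstar i)) :=
  calc α * ∑ i, ‖xp i - xstar i‖ ^ 2 = ∑ i, α * ‖xp i - xstar i‖ ^ 2 := mul_sum _ _ _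
    _ ≤ ∑ i, ⟪xp i - xstar i, mv (A i)ᵀ μ - mv (M i) (xp i - x i) - ρ • mv (A i)ᵀ u⟫ :=
      sum_le_sum fun i _ => h i
    _ = _ := by
      simp only [inner_block_eq _ (hM _), sum_sub_distrib, sum_add_distrib, ← mul_sum,
        ← sum_inner]

lemma sq_mul_norm_sq_le_of_blocks (A : (i : Fin N) → Matrix (Fin m) (Fin (n i)) ℝ)
    {cA L ρ : ℝ} (hcA0 : 0 ≤ cA) {μ : EuclideanSpace ℝ (Fin m)}
    (hcA : Real.sqrt (∑ i, ‖mv (A i)ᵀ μ‖ ^ 2) ≥ cA * ‖μ‖)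
    (d b : (i : Fin N) → EuclideanSpace ℝ (Fin (n i))) (u : EuclideanSpace ℝ (Fin m))
    (hblock : ∀ i, ‖mv (A i)ᵀ μ‖ ^ 2
      ≤ 2 * L * ‖d i‖ ^ 2 + 4 * ‖b i‖ ^ 2 + 4 * ρ ^ 2 * opN (A i)ᵀ ^ 2 * ‖u‖ ^ 2) :
    cA ^ 2 * ‖μ‖ ^ 2
      ≤ 2 * L * ∑ i, ‖d i‖ ^ 2 + 4 * ∑ i, ‖b i‖ ^ 2
        + 4 * ρ ^ 2 * (∑ i, opN (A i)ᵀ ^ 2) * ‖u‖ ^ 2 :=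
  calc cA ^ 2 * ‖μ‖ ^ 2 ≤ ∑ i, ‖mv (A i)ᵀ μ‖ ^ 2 := by
        rw [← mul_pow]
        exact (Real.le_sqrt (by positivity) (by positivity)).1 hcA
    _ ≤ ∑ i, (2 * L * ‖d i‖ ^ 2 + 4 * ‖b i‖ ^ 2 + 4 * ρ ^ 2 * opN (A i)ᵀ ^ 2 * ‖u‖ ^ 2) :=
      sum_le_sum fun i _ => hblock i
    _ = _ := by
      simp only [sum_add_distrib, ← mul_sum, ← sum_mul]

end Decomposition

theorem stmt14_general {N m : ℕ} (hN : 0 < N) (n : Fin N → ℕ)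
    (f : (i : Fin N) → EuclideanSpace ℝ (Fin (n i)) → ℝ)
    (g : (i : Fin N) → EuclideanSpace ℝ (Fin (n i)) → EuclideanSpace ℝ (Fin (n i)))
    (α : ℝ) (hα : 0 < α)
    (hsc : ∀ i x y, f i y ≥ f i x + ⟪y - x, g i x⟫ + α * ‖x - y‖ ^ 2)
    (Li : Fin N → ℝ)
    (hlip : ∀ i x y, ‖g i x - g i y‖ ≤ Li i * ‖x - y‖)
    (A : (i : Fin N) → Matrix (Fin m) (Fin (n i)) ℝ)
    (c : EuclideanSpace ℝ (Fin m))
    (ρ γ s : ℝ) (hρ : 0 < ρ) (hγ : 0 < γ) (hs : 0 < s)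
    (P : (i : Fin N) → Matrix (Fin (n i)) (Fin (n i)) ℝ)
    (hP : ∀ i, (P i).PosSemidef)
    (cA : ℝ) (hcA0 : 0 < cA)
    (hcA : ∀ μ : EuclideanSpace ℝ (Fin m),
      Real.sqrt (∑ i, ‖mv (A i)ᵀ μ‖ ^ 2) ≥ cA * ‖μ‖)
    (L D : ℝ)
    (hL : L = Finset.univ.sup' ⟨⟨0, hN⟩, Finset.mem_univ _⟩ (fun i => (Li i) ^ 2))
    (hD : D = ∑ i, opN (A i)ᵀ ^ 2)
    (xstar : (i : Fin N) → EuclideanSpace ℝ (Fin (n i)))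
    (lamstar : EuclideanSpace ℝ (Fin m))
    (hkkt1 : ∀ i, g i (xstar i) = mv (A i)ᵀ lamstar)
    (hkkt2 : ∑ i, mv (A i) (xstar i) = c)
    (x xp : (i : Fin N) → EuclideanSpace ℝ (Fin (n i)))
    (lam lamp : EuclideanSpace ℝ (Fin m))
    (hopt : ∀ i, g i (xp i) = mv (A i)ᵀ lam
        - ρ • mv (A i)ᵀ (mv (A i) (xp i) + (∑ j ∈ Finset.univ.erase i, mv (A j) (x j)) - c)
        + mv (P i) (x i - xp i))
    (hdual : lamp = lam - (γ * ρ) • ((∑ i, mv (A i) (xp i)) - c)) :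
    (1 / (2 * γ * ρ) - s * cA ^ 2) * ‖lam - lamstar‖ ^ 2
        + (1 / 2) * ∑ i, qf (ρ • ((A i)ᵀ * A i) + P i) (x i - xstar i)
        + 4 * s * ρ ^ 2 * D * ‖∑ j, mv (A j) (x j - xstar j)‖ ^ 2
      ≥ (α - 2 * L * s) * ∑ i, ‖xp i - xstar i‖ ^ 2
        + (1 / (2 * γ * ρ)) * ‖lamp - lamstar‖ ^ 2
        + (1 / 2) * ∑ i, qf (ρ • ((A i)ᵀ * A i) + P i) (xp i - xstar i)
        + (1 / 2) * ∑ i, qf (ρ • ((A i)ᵀ * A i) + P i) (xp i - x i)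
        - 4 * s * ∑ i, ‖mv (ρ • ((A i)ᵀ * A i) + P i) (xp i - x i)‖ ^ 2
        + ((2 - γ) / (2 * γ ^ 2 * ρ)) * ‖lamp - lam‖ ^ 2
        + (1 / γ) * ⟪lam - lamp, ∑ i, mv (A i) (x i - xp i)⟫ := by
  have hgap : ∀ i, g i (xp i) - g i (xstar i) = mv (A i)ᵀ (lam - lamstar)
      - mv (ρ • ((A i)ᵀ * A i) + P i) (xp i - x i)
      - ρ • mv (A i)ᵀ (∑ j, mv (A j) (x j - xstar j)) := fun i => by
    rw [hopt i, hkkt1 i, ← hkkt2]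
    exact admm_update_sub_kkt A P ρ x xstar lam lamstar i (xp i)
  have hprimal := sum_block_descent A (fun i => transpose_smul_transpose_mul_add (A i) (hP i) ρ)
    ρ α (lam - lamstar) (∑ j, mv (A j) (x j - xstar j)) x xp xstar fun i => by
      rw [← hgap i]
      linarith [two_mul_norm_sub_sq_le_inner_of_strongConvex (hsc i) (xp i) (xstar i),
        mul_nonneg hα.le (sq_nonneg ‖xp i - xstar i‖)]
  have hres : lam - lamp = (γ * ρ) • ∑ i, mv (A i) (xp i - xstar i) := by
    rw [hdual, ← hkkt2]
    simp only [mv_sub, sum_sub_distrib]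
    abel
  have hdualstep := inner_dual_step_eq hγ.ne' hρ.ne' lamstar (∑ j, mv (A j) (x j - xstar j)) hres
  have hcoupling : ∑ i, mv (A i) (x i - xp i)
      = ∑ j, mv (A j) (x j - xstar j) - ∑ i, mv (A i) (xp i - xstar i) := by
    simp only [mv_sub, sum_sub_distrib]
    abel
  have hgapbound := sq_mul_norm_sq_le_of_blocks A hcA0.le (hcA (lam - lamstar))
    (fun i => xp i - xstar i) (fun i => mv (ρ • ((A i)ᵀ * A i) + P i) (xp i - x i))
    (∑ j, mv (A j) (x j - xstar j)) fun i =>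
      norm_sq_le_of_eq_add_add_smul_mv (A i)ᵀ (by rw [hgap i]; abel) (hlip i _ _)
        (hL ▸ le_sup' (fun i => Li i ^ 2) (mem_univ i))
  rw [hcoupling, hD]
  linarith [mul_le_mul_of_nonneg_left hgapbound hs.le]

/-- the intermediate inequality (eq-3-2), prior to applying Cauchy–Schwarz
to the coupling term. -/
theorem stmt14 {N m : ℕ} (hN : 0 < N) (n : Fin N → ℕ)
    (f : (i : Fin N) → EuclideanSpace ℝ (Fin (n i)) → ℝ)
    (g : (i : Fin N) → EuclideanSpace ℝ (Fin (n i)) → EuclideanSpace ℝ (Fin (n i)))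
    (hdiff : ∀ i x, HasGradientAt (f i) (g i x) x)
    (α : ℝ) (hα : 0 < α)
    (hsc : ∀ i x y, f i y ≥ f i x + ⟪y - x, g i x⟫ + α * ‖x - y‖ ^ 2)
    (Li : Fin N → ℝ)
    (hlip : ∀ i x y, ‖g i x - g i y‖ ≤ Li i * ‖x - y‖)
    (A : (i : Fin N) → Matrix (Fin m) (Fin (n i)) ℝ)
    (c : EuclideanSpace ℝ (Fin m))
    (ρ γ s : ℝ) (hρ : 0 < ρ) (hγ : 0 < γ) (hs : 0 < s)
    (P : (i : Fin N) → Matrix (Fin (n i)) (Fin (n i)) ℝ)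
    (hP : ∀ i, (P i).PosSemidef)
    (cA : ℝ) (hcA0 : 0 < cA)
    (hcA : ∀ μ : EuclideanSpace ℝ (Fin m),
      Real.sqrt (∑ i, ‖mv (A i)ᵀ μ‖ ^ 2) ≥ cA * ‖μ‖)
    (L D : ℝ)
    (hL : L = Finset.univ.sup' ⟨⟨0, hN⟩, Finset.mem_univ _⟩ (fun i => (Li i) ^ 2))
    (hD : D = ∑ i, opN (A i)ᵀ ^ 2)
    (xstar : (i : Fin N) → EuclideanSpace ℝ (Fin (n i)))
    (lamstar : EuclideanSpace ℝ (Fin m))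
    (hkkt1 : ∀ i, g i (xstar i) = mv (A i)ᵀ lamstar)
    (hkkt2 : ∑ i, mv (A i) (xstar i) = c)
    (x xp : (i : Fin N) → EuclideanSpace ℝ (Fin (n i)))
    (lam lamp : EuclideanSpace ℝ (Fin m))
    (hopt : ∀ i, g i (xp i) = mv (A i)ᵀ lam
        - ρ • mv (A i)ᵀ (mv (A i) (xp i) + (∑ j ∈ Finset.univ.erase i, mv (A j) (x j)) - c)
        + mv (P i) (x i - xp i))
    (hdual : lamp = lam - (γ * ρ) • ((∑ i, mv (A i) (xp i)) - c)) :
    (1 / (2 * γ * ρ) - s * cA ^ 2) * ‖lam - lamstar‖ ^ 2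
        + (1 / 2) * ∑ i, qf (ρ • ((A i)ᵀ * A i) + P i) (x i - xstar i)
        + 4 * s * ρ ^ 2 * D * ‖∑ j, mv (A j) (x j - xstar j)‖ ^ 2
      ≥ (α - 2 * L * s) * ∑ i, ‖xp i - xstar i‖ ^ 2
        + (1 / (2 * γ * ρ)) * ‖lamp - lamstar‖ ^ 2
        + (1 / 2) * ∑ i, qf (ρ • ((A i)ᵀ * A i) + P i) (xp i - xstar i)
        + (1 / 2) * ∑ i, qf (ρ • ((A i)ᵀ * A i) + P i) (xp i - x i)
        - 4 * s * ∑ i, ‖mv (ρ • ((A i)ᵀ * A i) + P i) (xp i - x i)‖ ^ 2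
        + ((2 - γ) / (2 * γ ^ 2 * ρ)) * ‖lamp - lam‖ ^ 2
        + (1 / γ) * ⟪lam - lamp, ∑ i, mv (A i) (x i - xp i)⟫ :=
  stmt14_general hN n f g α hα hsc Li hlip A c ρ γ s hρ hγ hs P hP cA hcA0 hcA L D hL hD xstar
    lamstar hkkt1 hkkt2 x xp lam lamp hopt hdual
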